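/- Let $F(\mathbf{x};\mathbf{y}) = x_1 y_1^2 + x_2 y_2^2 + x_3 y_3^2 + x_4 y_4^2$. Then the integral $\int_{-\infty}^{\infty} \left| \int_{[-1,1]^8} e(-\theta F(\mathbf{x};\mathbf{y}))\, d\mathbf{x}\, d\mathbf{y} \right| d\theta$ is finite. -/

import Mathlib

open MeasureTheory Set

set_option maxHeartbeats 1000000

lemma my_restrict_pi {ι} [Fintype ι] (μ : ι → Measure ℝ) [∀ i, SigmaFinite (μ i)]
    (s : ι → Set ℝ) (hs : ∀ i, MeasurableSet (s i)) :
    (Measure.pi μ).restrict (Set.pi Set.univ s) = Measure.pi (fun i => (μ i).restrict (s i)) := by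
  refine (Measure.pi_eq fun t ht => ?_).symm
  rw [Measure.restrict_apply (MeasurableSet.univ_pi ht), ← Set.pi_inter_distrib, Measure.pi_pi]
  exact Finset.prod_congr rfl fun i _ => (Measure.restrict_apply (ht i)).symm

lemma my_pi_integral_prod {ι} [Fintype ι] (μ : Measure ℝ) [SigmaFinite μ] (f : ι → ℝ → ℂ) :
    ∫ x : ι → ℝ, ∏ i, f i (x i) ∂(Measure.pi fun _ => μ) = ∏ i, ∫ x, f i x ∂μ := by
  letI : MeasureSpace ℝ := ⟨μ⟩
  haveI : SigmaFinite (volume : Measure ℝ) := ‹_›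
  exact integral_fintype_prod_eq_prod (μ := fun _ => μ) f

noncomputable def ee (θ x y : ℝ) : ℂ :=
  Complex.exp (-(2 * Real.pi * Complex.I) * θ * (x * y ^ 2))

noncomputable def F1 (θ x : ℝ) : ℂ := ∫ y in Set.Icc (-1:ℝ) 1, ee θ x y
noncomputable def AA (θ y : ℝ) : ℂ := ∫ x in Set.Icc (-1:ℝ) 1, ee θ x y
noncomputable def gg (θ : ℝ) : ℂ := ∫ x in Set.Icc (-1:ℝ) 1, F1 θ x

lemma hres : (volume : Measure (Fin 4 → ℝ)).restrict (Set.Icc (-1) 1)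
    = Measure.pi (fun _ : Fin 4 => (volume : Measure ℝ).restrict (Set.Icc (-1:ℝ) 1)) := by
  have : (Set.Icc (-1 : Fin 4 → ℝ) 1) = Set.pi Set.univ (fun _ => Set.Icc (-1:ℝ) 1) := by
    rw [Set.pi_univ_Icc]; rfl
  rw [this, volume_pi, my_restrict_pi _ _ (fun _ => measurableSet_Icc)]

lemma factor (θ : ℝ) :
    (∫ x in Set.Icc (-1 : Fin 4 → ℝ) 1, ∫ y in Set.Icc (-1 : Fin 4 → ℝ) 1,
        Complex.exp (-(2 * Real.pi * Complex.I) * (θ : ℂ) *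
          ((∑ i, x i * (y i) ^ 2 : ℝ) : ℂ))) = (gg θ) ^ 4 := by
  have key : ∀ x y : Fin 4 → ℝ,
      Complex.exp (-(2 * Real.pi * Complex.I) * (θ : ℂ) *
          ((∑ i, x i * (y i) ^ 2 : ℝ) : ℂ)) = ∏ i, ee θ (x i) (y i) := by
    intro x y
    simp only [ee]
    rw [← Complex.exp_sum]
    congr 1
    push_cast
    rw [Finset.mul_sum]
  calc (∫ x in Set.Icc (-1 : Fin 4 → ℝ) 1, ∫ y in Set.Icc (-1 : Fin 4 → ℝ) 1,
        Complex.exp (-(2 * Real.pi * Complex.I) * (θ : ℂ) *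
          ((∑ i, x i * (y i) ^ 2 : ℝ) : ℂ)))
      = ∫ x in Set.Icc (-1 : Fin 4 → ℝ) 1, ∏ i, F1 θ (x i) := by
        refine setIntegral_congr_fun measurableSet_Icc (fun x _ => ?_)
        simp_rw [key]
        rw [hres, my_pi_integral_prod]
        rfl
    _ = (gg θ) ^ 4 := by
        rw [hres, my_pi_integral_prod]
        simp [gg, Finset.prod_const]

lemma ee_cont (θ : ℝ) : Continuous (fun p : ℝ × ℝ => ee θ p.1 p.2) := by
  unfold ee
  fun_prop

lemma ee_form (θ x y : ℝ) :
    ee θ x y = Complex.exp (((-(2 * Real.pi * θ * (x * y ^ 2)) : ℝ) : ℂ) * Complex.I) := by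
  unfold ee
  congr 1
  push_cast
  ring

lemma ee_abs (θ x y : ℝ) : ‖ee θ x y‖ = 1 := by
  rw [ee_form, Complex.norm_exp_ofReal_mul_I]

lemma swap (θ : ℝ) : gg θ = ∫ y in Set.Icc (-1:ℝ) 1, AA θ y := by
  unfold gg F1 AA
  apply integral_integral_swap
  rw [Measure.prod_restrict]
  exact ((ee_cont θ).continuousOn).integrableOn_compact (isCompact_Icc.prod isCompact_Icc)

lemma AA_le_two (θ y : ℝ) : ‖AA θ y‖ ≤ 2 := by
  have := norm_setIntegral_le_of_norm_le_const (μ := volume) (s := Set.Icc (-1:ℝ) 1)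
    (f := fun x => ee θ x y) (C := 1) (by simp)
    (fun x _ => by rw [ee_abs])
  simp only [Measure.real, Real.volume_Icc, AA] at this
  norm_num at this
  exact this

lemma F1_le_two (θ x : ℝ) : ‖F1 θ x‖ ≤ 2 := by
  have := norm_setIntegral_le_of_norm_le_const (μ := volume) (s := Set.Icc (-1:ℝ) 1)
    (f := fun y => ee θ x y) (C := 1) (by simp)
    (fun y _ => by rw [ee_abs])
  simp only [Measure.real, Real.volume_Icc, F1] at this
  norm_num at this
  exact this

lemma gg_le_four (θ : ℝ) : ‖gg θ‖ ≤ 4 := by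
  have := norm_setIntegral_le_of_norm_le_const (μ := volume) (s := Set.Icc (-1:ℝ) 1)
    (f := fun x => F1 θ x) (C := 2) (by simp)
    (fun x _ => by exact F1_le_two θ x)
  simp only [Measure.real, Real.volume_Icc, gg] at this
  norm_num at this
  calc ‖gg θ‖ = ‖(∫ x in Set.Icc (-1:ℝ) 1, F1 θ x)‖ := rfl
    _ ≤ 4 := by exact_mod_cast this

lemma AA_le (θ y : ℝ) (hθ : θ ≠ 0) (hy : y ≠ 0) :
    ‖AA θ y‖ ≤ 1 / (Real.pi * |θ| * y ^ 2) := by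
  have hsne : 2 * Real.pi * θ * y ^ 2 ≠ 0 :=
    mul_ne_zero (mul_ne_zero (mul_ne_zero two_ne_zero Real.pi_ne_zero) hθ) (pow_ne_zero 2 hy)
  have hbne : ((-(2 * Real.pi * θ * y ^ 2) : ℝ) : ℂ) * Complex.I ≠ 0 := by
    simp [Complex.ext_iff, Real.pi_ne_zero, hθ, hy]
  have hA : AA θ y = (Complex.exp ((((-(2 * Real.pi * θ * y ^ 2)) : ℝ) : ℂ) * Complex.I * ((1:ℝ):ℂ))
      - Complex.exp ((((-(2 * Real.pi * θ * y ^ 2)) : ℝ) : ℂ) * Complex.I * (((-1:ℝ)):ℂ)))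
      / ((((-(2 * Real.pi * θ * y ^ 2)) : ℝ) : ℂ) * Complex.I) := by
    unfold AA
    have hfun : ∀ x : ℝ, ee θ x y
        = Complex.exp ((((-(2 * Real.pi * θ * y ^ 2)) : ℝ) : ℂ) * Complex.I * (x:ℂ)) := by
      intro x
      unfold ee
      congr 1
      push_cast
      ring
    simp_rw [hfun]
    rw [integral_Icc_eq_integral_Ioc, ← intervalIntegral.integral_of_le (by norm_num : (-1:ℝ) ≤ 1)]
    rw [integral_exp_mul_complex hbne]
  have key : ∀ t : ℝ, ‖Complex.exp
      ((((-(2 * Real.pi * θ * y ^ 2)) : ℝ) : ℂ) * Complex.I * ((t:ℝ):ℂ))‖ = 1 := by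
    intro t
    have : (((-(2 * Real.pi * θ * y ^ 2)) : ℝ) : ℂ) * Complex.I * ((t:ℝ):ℂ)
        = (((-(2 * Real.pi * θ * y ^ 2)) * t : ℝ) : ℂ) * Complex.I := by push_cast; ring
    rw [this, Complex.norm_exp_ofReal_mul_I]
  rw [hA, norm_div]
  have habs : ‖(((-(2 * Real.pi * θ * y ^ 2)) : ℝ) : ℂ) * Complex.I‖
      = 2 * (Real.pi * |θ| * y ^ 2) := by
    rw [norm_mul, Complex.norm_I, Complex.norm_real, mul_one, Real.norm_eq_abs, abs_neg, abs_mul, abs_mul]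
    rw [abs_of_nonneg (by positivity : (0:ℝ) ≤ 2 * Real.pi), abs_of_nonneg (sq_nonneg y)]
    ring
  rw [habs]
  have hnum : ‖Complex.exp ((((-(2 * Real.pi * θ * y ^ 2)) : ℝ) : ℂ) * Complex.I * ((1:ℝ):ℂ))
      - Complex.exp ((((-(2 * Real.pi * θ * y ^ 2)) : ℝ) : ℂ) * Complex.I * (((-1:ℝ)):ℂ))‖ ≤ 2 := by
    refine le_trans (norm_sub_le _ _) ?_
    rw [key 1, key (-1)]; norm_num
  have hpos : 0 < Real.pi * |θ| * y ^ 2 := by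
    have := abs_pos.mpr hθ
    have := Real.pi_pos
    positivity
  rw [div_le_div_iff₀ (by positivity) hpos]
  nlinarith [hnum, hpos]

lemma min_le_rpow {t : ℝ} (ht : 0 < t) : min 2 (1/t) ≤ 2 * t ^ (-(3:ℝ)/8) := by
  rcases le_total t 1 with h | h
  · have h1 : (1:ℝ) ≤ t ^ (-(3:ℝ)/8) :=
      Real.one_le_rpow_of_pos_of_le_one_of_nonpos ht h (by norm_num)
    calc min 2 (1/t) ≤ 2 := min_le_left _ _
      _ ≤ 2 * t ^ (-(3:ℝ)/8) := by linarith
  · have h1 : t ^ (-1:ℝ) ≤ t ^ (-(3:ℝ)/8) :=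
      Real.rpow_le_rpow_of_exponent_le h (by norm_num)
    rw [Real.rpow_neg_one] at h1
    calc min 2 (1/t) ≤ 1/t := min_le_right _ _
      _ = t⁻¹ := one_div t
      _ ≤ t ^ (-(3:ℝ)/8) := h1
      _ ≤ 2 * t ^ (-(3:ℝ)/8) := by nlinarith [Real.rpow_nonneg ht.le (-(3:ℝ)/8)]

lemma int_pos_side : IntegrableOn (fun y : ℝ => |y| ^ (-(3:ℝ)/4)) (Icc (0:ℝ) 1) := by
  have II : IntervalIntegrable (fun x : ℝ => x ^ (-(3:ℝ)/4)) volume 0 1 :=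
    intervalIntegral.intervalIntegrable_rpow' (by norm_num)
  rw [intervalIntegrable_iff, uIoc_of_le (by norm_num : (0:ℝ) ≤ 1)] at II
  have h1 : IntegrableOn (fun y : ℝ => |y| ^ (-(3:ℝ)/4)) (Ioc (0:ℝ) 1) := by
    refine II.congr_fun (fun y hy => ?_) measurableSet_Ioc
    rw [abs_of_pos hy.1]
  rwa [integrableOn_Icc_iff_integrableOn_Ioc]

lemma int_neg_side : IntegrableOn (fun y : ℝ => |y| ^ (-(3:ℝ)/4)) (Icc (-1:ℝ) 0) := by
  have m : MeasurableEmbedding fun x : ℝ => -x := (Homeomorph.neg ℝ).measurableEmbedding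
  rw [IntegrableOn, ← Measure.map_neg_eq_self (volume : Measure ℝ)]
  rw [← IntegrableOn, m.integrableOn_map_iff]
  simp_rw [Function.comp_def, abs_neg, neg_preimage, neg_Icc, neg_zero, neg_neg]
  exact int_pos_side

lemma Jint : IntegrableOn (fun y : ℝ => |y| ^ (-(3:ℝ)/4)) (Icc (-1:ℝ) 1) := by
  have := int_neg_side.union int_pos_side
  rwa [Set.Icc_union_Icc_eq_Icc (by norm_num : (-1:ℝ) ≤ 0) (by norm_num : (0:ℝ) ≤ 1)] at this

lemma pos_val : ∫ y in Icc (0:ℝ) 1, |y| ^ (-(3:ℝ)/4) = 4 := by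
  rw [integral_Icc_eq_integral_Ioc, ← intervalIntegral.integral_of_le (by norm_num : (0:ℝ) ≤ 1)]
  have : ∀ y ∈ Set.uIcc (0:ℝ) 1, |y| ^ (-(3:ℝ)/4) = y ^ (-(3:ℝ)/4) := by
    intro y hy
    rw [Set.uIcc_of_le (by norm_num : (0:ℝ) ≤ 1)] at hy
    rcases eq_or_lt_of_le hy.1 with h | h
    · rw [← h]; simp
    · rw [abs_of_pos h]
  rw [intervalIntegral.integral_congr this, integral_rpow (Or.inl (by norm_num : (-1:ℝ) < -3/4))]
  norm_num

lemma neg_val : ∫ y in Icc (-1:ℝ) 0, |y| ^ (-(3:ℝ)/4) = 4 := by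
  have m : MeasurableEmbedding fun x : ℝ => -x := (Homeomorph.neg ℝ).measurableEmbedding
  have h := m.setIntegral_map (μ := volume) (g := fun y : ℝ => |y| ^ (-(3:ℝ)/4)) (s := Icc (-1:ℝ) 0)
  rw [Measure.map_neg_eq_self (volume : Measure ℝ)] at h
  simp_rw [abs_neg, neg_preimage, neg_Icc, neg_zero, neg_neg] at h
  rw [h, pos_val]

lemma Jval : ∫ y in Icc (-1:ℝ) 1, |y| ^ (-(3:ℝ)/4) = 8 := by
  rw [← Set.Icc_union_Ioc_eq_Icc (by norm_num : (-1:ℝ) ≤ 0) (by norm_num : (0:ℝ) ≤ 1)]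
  rw [setIntegral_union (Set.disjoint_left.mpr (fun y hy1 hy2 => absurd hy1.2 (not_le.mpr hy2.1)))
    measurableSet_Ioc int_neg_side (int_pos_side.mono_set Ioc_subset_Icc_self)]
  rw [neg_val, ← integral_Icc_eq_integral_Ioc, pos_val]
  norm_num

lemma gg_bound (θ : ℝ) (hθ : θ ≠ 0) :
    ‖gg θ‖ ≤ 16 * (Real.pi * |θ|) ^ (-(3:ℝ)/8) := by
  have hθpos : 0 < |θ| := abs_pos.mpr hθ
  have hpipos := Real.pi_pos
  set c : ℝ := (Real.pi * |θ|) ^ (-(3:ℝ)/8) with hc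
  have hcpos : 0 < c := Real.rpow_pos_of_pos (by positivity) _
  rw [swap]
  have hint : Integrable (fun y : ℝ => 2 * c * |y| ^ (-(3:ℝ)/4))
      ((volume : Measure ℝ).restrict (Icc (-1:ℝ) 1)) := Jint.const_mul _
  have hae : ∀ᵐ y ∂((volume : Measure ℝ).restrict (Icc (-1:ℝ) 1)),
      ‖AA θ y‖ ≤ 2 * c * |y| ^ (-(3:ℝ)/4) := by
    apply ae_restrict_of_ae
    have h0 : ∀ᵐ y : ℝ ∂volume, y ≠ 0 := by
      rw [ae_iff]
      simp only [not_not, Set.setOf_eq_eq_singleton]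
      exact measure_singleton 0
    filter_upwards [h0] with y hy
    have hypos : 0 < y ^ 2 := by positivity
    have hpos : 0 < Real.pi * |θ| * y ^ 2 := by positivity
    have h1 : ‖AA θ y‖ ≤ min 2 (1/(Real.pi * |θ| * y ^ 2)) :=
      le_min (AA_le_two θ y) (AA_le θ y hθ hy)
    have h2 : min 2 (1/(Real.pi * |θ| * y ^ 2)) ≤ 2 * (Real.pi * |θ| * y ^ 2) ^ (-(3:ℝ)/8) :=
      min_le_rpow hpos
    have h3 : (Real.pi * |θ| * y ^ 2) ^ (-(3:ℝ)/8) = c * |y| ^ (-(3:ℝ)/4) := by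
      rw [show Real.pi * |θ| * y ^ 2 = (Real.pi * |θ|) * |y| ^ 2 by rw [sq_abs]]
      rw [Real.mul_rpow (by positivity) (by positivity), hc]
      congr 1
      rw [← Real.rpow_natCast |y| 2, ← Real.rpow_mul (abs_nonneg y)]
      norm_num
    calc ‖AA θ y‖ ≤ min 2 (1/(Real.pi * |θ| * y ^ 2)) := h1
      _ ≤ 2 * (Real.pi * |θ| * y ^ 2) ^ (-(3:ℝ)/8) := h2
      _ = 2 * c * |y| ^ (-(3:ℝ)/4) := by rw [h3]; ring
  have := norm_integral_le_of_norm_le hint hae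
  calc ‖(∫ y in Set.Icc (-1:ℝ) 1, AA θ y)‖
      ≤ ∫ y in Icc (-1:ℝ) 1, 2 * c * |y| ^ (-(3:ℝ)/4) := this
    _ = 2 * c * ∫ y in Icc (-1:ℝ) 1, |y| ^ (-(3:ℝ)/4) := by rw [integral_const_mul]
    _ = 16 * c := by rw [Jval]; ring

lemma main_bound (θ : ℝ) (hθ : θ ≠ 0) :
    ‖gg θ‖ ^ 4
      ≤ 65536 * Real.pi ^ (-(3:ℝ)/2) * |θ| ^ (-(3:ℝ)/2) := by
  have hθpos : 0 < |θ| := abs_pos.mpr hθ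
  have hpipos := Real.pi_pos
  have h := gg_bound θ hθ
  have h4 : ‖gg θ‖ ^ 4 ≤ (16 * (Real.pi * |θ|) ^ (-(3:ℝ)/8)) ^ 4 :=
    pow_le_pow_left₀ (norm_nonneg _) h 4
  have hrw : (16 * (Real.pi * |θ|) ^ (-(3:ℝ)/8)) ^ 4
      = 65536 * Real.pi ^ (-(3:ℝ)/2) * |θ| ^ (-(3:ℝ)/2) := by
    rw [mul_pow, ← Real.rpow_natCast ((Real.pi * |θ|) ^ (-(3:ℝ)/8)) 4,
      ← Real.rpow_mul (by positivity)]
    norm_num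
    rw [Real.mul_rpow hpipos.le hθpos.le]
    ring
  rw [hrw] at h4
  exact h4

theorem stmt_11 :
    ∫⁻ θ : ℝ, ENNReal.ofReal (‖(∫ x in Set.Icc (-1 : Fin 4 → ℝ) 1, ∫ y in Set.Icc (-1 : Fin 4 → ℝ) 1,
        Complex.exp (-(2 * Real.pi * Complex.I) * (θ : ℂ) *
          ((∑ i, x i * (y i) ^ 2 : ℝ) : ℂ)))‖) < ⊤ := by
  have hfac : (fun θ : ℝ => ENNReal.ofReal (‖(∫ x in Set.Icc (-1 : Fin 4 → ℝ) 1, ∫ y in Set.Icc (-1 : Fin 4 → ℝ) 1,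
        Complex.exp (-(2 * Real.pi * Complex.I) * (θ : ℂ) *
          ((∑ i, x i * (y i) ^ 2 : ℝ) : ℂ)))‖))
      = fun θ : ℝ => ENNReal.ofReal (‖gg θ‖ ^ 4) := by
    funext θ
    rw [factor θ, norm_pow]
  rw [hfac]
  rw [← lintegral_add_compl (fun θ : ℝ => ENNReal.ofReal (‖gg θ‖ ^ 4))
    (measurableSet_Icc (a := (-1:ℝ)) (b := 1))]
  apply ENNReal.add_lt_top.mpr
  constructor
  · calc ∫⁻ θ in Icc (-1:ℝ) 1, ENNReal.ofReal (‖gg θ‖ ^ 4)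
        ≤ ∫⁻ _ in Icc (-1:ℝ) 1, ENNReal.ofReal 256 := by
          apply lintegral_mono
          intro θ
          apply ENNReal.ofReal_le_ofReal
          have h1 := gg_le_four θ
          have h0 := norm_nonneg (gg θ)
          calc ‖gg θ‖ ^ 4 ≤ 4 ^ 4 := pow_le_pow_left₀ h0 h1 4
            _ = 256 := by norm_num
      _ = ENNReal.ofReal 256 * volume (Icc (-1:ℝ) 1) := setLIntegral_const _ _
      _ < ⊤ := ENNReal.mul_lt_top ENNReal.ofReal_lt_top (by
          rw [Real.volume_Icc]; exact ENNReal.ofReal_lt_top)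
  · have hint2 : IntegrableOn
        (fun θ : ℝ => 65536 * Real.pi ^ (-(3:ℝ)/2) * |θ| ^ (-(3:ℝ)/2))
        ((Icc (-1:ℝ) 1)ᶜ) := by
      have hcompl : (Icc (-1:ℝ) 1)ᶜ = Iio (-1) ∪ Ioi 1 := by
        ext θ
        simp only [mem_compl_iff, mem_Icc, not_and_or, not_le, mem_union, mem_Iio, mem_Ioi]
      rw [hcompl]
      apply integrableOn_union.mpr
      have base : IntegrableOn (fun θ : ℝ => θ ^ (-(3:ℝ)/2)) (Ioi (1:ℝ)) :=
        integrableOn_Ioi_rpow_of_lt (by norm_num) one_pos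
      have babs : IntegrableOn (fun θ : ℝ => |θ| ^ (-(3:ℝ)/2)) (Ioi (1:ℝ)) := by
        refine base.congr_fun (fun θ hθ => ?_) measurableSet_Ioi
        rw [abs_of_pos (lt_trans one_pos hθ)]
      have hpos : IntegrableOn
          (fun θ : ℝ => 65536 * Real.pi ^ (-(3:ℝ)/2) * |θ| ^ (-(3:ℝ)/2)) (Ioi (1:ℝ)) :=
        babs.const_mul _
      refine ⟨?_, hpos⟩
      have m : MeasurableEmbedding fun x : ℝ => -x := (Homeomorph.neg ℝ).measurableEmbedding
      rw [IntegrableOn, ← Measure.map_neg_eq_self (volume : Measure ℝ)]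
      rw [← IntegrableOn, m.integrableOn_map_iff]
      simp_rw [Function.comp_def, abs_neg, neg_preimage, neg_Iio, neg_neg]
      exact hpos
    have hmeas : AEStronglyMeasurable
        (fun θ : ℝ => 65536 * Real.pi ^ (-(3:ℝ)/2) * |θ| ^ (-(3:ℝ)/2))
        ((volume : Measure ℝ).restrict ((Icc (-1:ℝ) 1)ᶜ)) := by
      apply ContinuousOn.aestronglyMeasurable ?_ measurableSet_Icc.compl
      intro θ hθ
      apply ContinuousAt.continuousWithinAt
      have habs : |θ| ≠ 0 := by
        simp only [mem_compl_iff, mem_Icc, not_and_or, not_le] at hθ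
        rcases hθ with h | h <;> intro h0 <;> rw [abs_eq_zero] at h0 <;> rw [h0] at h <;> linarith
      exact (((Real.continuousAt_rpow_const _ _ (Or.inl habs)).comp
        continuous_abs.continuousAt)).const_mul _
    have hne : ∫⁻ θ in (Icc (-1:ℝ) 1)ᶜ,
        ENNReal.ofReal (65536 * Real.pi ^ (-(3:ℝ)/2) * |θ| ^ (-(3:ℝ)/2)) ≠ ⊤ := by
      rw [lintegral_ofReal_ne_top_iff_integrable hmeas
        (Filter.Eventually.of_forall (fun θ => by positivity))]
      exact hint2
    have hmono : ∫⁻ θ in (Icc (-1:ℝ) 1)ᶜ, ENNReal.ofReal (‖gg θ‖ ^ 4)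
        ≤ ∫⁻ θ in (Icc (-1:ℝ) 1)ᶜ,
          ENNReal.ofReal (65536 * Real.pi ^ (-(3:ℝ)/2) * |θ| ^ (-(3:ℝ)/2)) := by
      apply lintegral_mono_ae
      filter_upwards [ae_restrict_mem measurableSet_Icc.compl] with θ hθmem
      have hθne : θ ≠ 0 := by
        intro h0
        apply hθmem
        rw [h0]
        constructor <;> norm_num
      exact ENNReal.ofReal_le_ofReal (main_bound θ hθne)
    exact lt_of_le_of_lt hmono (lt_top_iff_ne_top.mpr hne)
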